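/- For t ≥ 3, the set S consisting of all of V_2 together with all binary strings in V_1 having an even number of 1's is a fault-tolerant resolving set of M_t of size t + 2^{t−1}. -/

import Mathlib

/-!
In `M_t` two distinct strings are adjacent, `v_i` is at distance 1 or 2 from a string according to
its `i`-th bit, and distinct `v_i`, `v_j` are at distance 2. Hence every pair of distinct vertices
is resolved by two distinct elements of `S`, which makes `S` fault-tolerant: strings differing in
coordinates `i ≠ j` are resolved by `v_i` and `v_j`; strings differing only in coordinate `i` have
weights of opposite parity, so they are resolved by `v_i` and by the even one of them; a string and
`v_j` are resolved by `v_j` and by the zero string, which is at distance 2 from `v_j`; and `v_i`,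
`v_j` resolve themselves. Flipping a fixed bit pairs the even strings with the odd ones, so there
are `2^(t-1)` of them.
-/

open SimpleGraph Function
open scoped Classical

/-- A set `S` is a resolving set of `G`: every pair of distinct vertices differ in
distance to some element of `S`. -/
def IsResolving {V : Type*} (G : SimpleGraph V) (S : Set V) : Prop :=
  ∀ x y : V, x ≠ y → ∃ s ∈ S, G.dist s x ≠ G.dist s y

/-- A fault-tolerant resolving set: removing any single vertex leaves a resolving set. -/
def IsFTResolving {V : Type*} (G : SimpleGraph V) (S : Set V) : Prop :=
  ∀ s ∈ S, IsResolving G (S \ {s})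

/-- The metric dimension of `G`. -/
noncomputable def metricDim {V : Type*} [Fintype V] (G : SimpleGraph V) : ℕ :=
  sInf {n | ∃ S : Finset V, IsResolving G ↑S ∧ S.card = n}

/-- The fault-tolerant metric dimension of `G`. -/
noncomputable def ftDim {V : Type*} [Fintype V] (G : SimpleGraph V) : ℕ :=
  sInf {n | ∃ S : Finset V, IsFTResolving G ↑S ∧ S.card = n}

/-- `S` is a `k`-resolving set: every pair of distinct vertices is distinguished
by at least `k` vertices of `S`. -/
def IsKResolving {V : Type*} [Fintype V] (G : SimpleGraph V) (k : ℕ) (S : Finset V) : Prop :=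
  ∀ x y : V, x ≠ y → k ≤ (S.filter (fun s => G.dist s x ≠ G.dist s y)).card

/-- The `k`-metric dimension of `G`. -/
noncomputable def kMetricDim {V : Type*} [Fintype V] (G : SimpleGraph V) (k : ℕ) : ℕ :=
  sInf {n | ∃ S : Finset V, IsKResolving G k S ∧ S.card = n}

/-- The graph `M_t`: a clique on all binary strings of length `t`, together with
independent vertices `v_1, …, v_t`, where `v_i` is adjacent to exactly those strings
having `1` (`true`) at coordinate `i`. -/
def Mt (t : ℕ) : SimpleGraph ((Fin t → Bool) ⊕ Fin t) where
  Adj x y :=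
    match x, y with
    | Sum.inl u, Sum.inl v => u ≠ v
    | Sum.inl u, Sum.inr i => u i = true
    | Sum.inr i, Sum.inl u => u i = true
    | Sum.inr _, Sum.inr _ => False
  symm := by
    constructor
    rintro (u | i) (v | j) h
    · exact h.symm
    · exact h
    · exact h
    · exact h
  loopless := by
    constructor
    rintro (u | i) h
    · exact h rfl
    · exact h

open Finset Sum

theorem SimpleGraph.dist_eq_two_of_adj_of_adj {V : Type*} {G : SimpleGraph V} {u v w : V}
    (hne : u ≠ v) (hnadj : ¬G.Adj u v) (huw : G.Adj u w) (hwv : G.Adj w v) : G.dist u v = 2 := by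
  rw [dist, edist_eq_two_iff.mpr ⟨hne, hnadj, w, huw, hwv.symm⟩]
  rfl

theorem SimpleGraph.Connected.dist_self_ne {V : Type*} {G : SimpleGraph V} (hG : G.Connected)
    {s x : V} (h : s ≠ x) : G.dist s s ≠ G.dist s x := by
  rw [dist_self]
  exact (hG.pos_dist_of_ne h).ne

section DoublyResolved

variable {V : Type*} {G : SimpleGraph V} {S : Set V} {x y : V}

def IsDoublyResolved (G : SimpleGraph V) (S : Set V) (x y : V) : Prop :=
  ∃ a ∈ S, ∃ b ∈ S, a ≠ b ∧ G.dist a x ≠ G.dist a y ∧ G.dist b x ≠ G.dist b y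

theorem IsDoublyResolved.symm (h : IsDoublyResolved G S x y) : IsDoublyResolved G S y x :=
  let ⟨a, ha, b, hb, hab, hax, hbx⟩ := h
  ⟨a, ha, b, hb, hab, hax.symm, hbx.symm⟩

theorem isFTResolving_of_isDoublyResolved (h : ∀ x y, x ≠ y → IsDoublyResolved G S x y) :
    IsFTResolving G S := by
  intro s _ x y hxy
  obtain ⟨a, ha, b, hb, hab, hax, hbx⟩ := h x y hxy
  by_cases has : a = s
  · exact ⟨b, ⟨hb, by rintro rfl; exact hab has⟩, hbx⟩
  · exact ⟨a, ⟨ha, has⟩, hax⟩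

end DoublyResolved

section weight

variable {ι : Type*} [Fintype ι] [DecidableEq ι]

def weight (u : ι → Bool) : ℕ := #{i | u i = true}

theorem weight_update_true {u : ι → Bool} {i : ι} (h : u i = false) :
    weight (update u i true) = weight u + 1 := by
  have hsupport : filter (fun j ↦ update u i true j = true) univ =
      insert i (filter (fun j ↦ u j = true) univ) := by
    ext j
    by_cases hj : j = i <;> simp [hj, update_apply]
  rw [weight, hsupport, card_insert_of_notMem (by simp [h]), weight]

theorem even_weight_flip (u : ι → Bool) (i : ι) :
    Even (weight (update u i (!u i))) ↔ ¬Even (weight u) := by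
  cases hi : u i
  · simp [weight_update_true hi, Nat.even_add_one]
  · have hflip : (update u i false) i = false := update_self ..
    have hu : update (update u i false) i true = u := by simp [← hi]
    rw [Bool.not_true, ← hu, weight_update_true hflip, hu, Nat.even_add_one, not_not]

theorem card_even_weight [Nonempty ι] :
    #{u : ι → Bool | Even (weight u)} = 2 ^ (Fintype.card ι - 1) := by
  obtain ⟨i⟩ := ‹Nonempty ι›
  have hflip : ∀ u : ι → Bool, update (update u i (!u i)) i (!(update u i (!u i)) i) = u := by
    simp
  have heven_odd : #{u : ι → Bool | Even (weight u)} = #{u : ι → Bool | ¬Even (weight u)} :=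
    card_nbij' (fun u ↦ update u i (!u i)) (fun u ↦ update u i (!u i))
      (fun u hu ↦ by simp_all [-Nat.not_even_iff_odd, even_weight_flip])
      (fun u hu ↦ by simp_all [-Nat.not_even_iff_odd, even_weight_flip])
      (fun u _ ↦ hflip u) (fun u _ ↦ hflip u)
  have htotal := card_filter_add_card_filter_not (s := (univ : Finset (ι → Bool)))
    (fun u ↦ Even (weight u))
  rw [card_univ, Fintype.card_fun, Fintype.card_bool, ← heven_odd] at htotal
  have hpos : Fintype.card ι = Fintype.card ι - 1 + 1 := by
    have := Fintype.card_pos (α := ι); omega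
  rw [hpos, pow_succ] at htotal
  omega

end weight

namespace Mt

variable {t : ℕ}

@[simp] theorem adj_inl_inl {u v : Fin t → Bool} : (Mt t).Adj (inl u) (inl v) ↔ u ≠ v := Iff.rfl

@[simp] theorem adj_inr_inl {i : Fin t} {u : Fin t → Bool} :
    (Mt t).Adj (inr i) (inl u) ↔ u i = true := Iff.rfl

theorem connected (t : ℕ) : (Mt t).Connected := by
  have hone : ∀ x, (Mt t).Reachable x (inl fun _ ↦ true) := by
    rintro (u | i)
    · by_cases hu : u = fun _ ↦ true
      · rw [hu]
      · exact Adj.reachable (adj_inl_inl.2 hu)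
    · exact Adj.reachable (adj_inr_inl.2 rfl)
  exact Connected.mk fun x y ↦ (hone x).trans (hone y).symm

theorem dist_inl_inl {u v : Fin t → Bool} (h : u ≠ v) : (Mt t).dist (inl u) (inl v) = 1 :=
  dist_eq_one_iff_adj.2 h

theorem dist_inl_inl_le_one (u v : Fin t → Bool) : (Mt t).dist (inl u) (inl v) ≤ 1 := by
  by_cases h : u = v
  · simp [h]
  · rw [dist_inl_inl h]

theorem dist_inr_inl_of_true {i : Fin t} {u : Fin t → Bool} (h : u i = true) :
    (Mt t).dist (inr i) (inl u) = 1 :=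
  dist_eq_one_iff_adj.2 h

theorem dist_inr_inl_of_false {i : Fin t} {u : Fin t → Bool} (h : u i = false) :
    (Mt t).dist (inr i) (inl u) = 2 := by
  have hne : update u i true ≠ u := fun he ↦ by simpa [h] using congr_fun he i
  exact dist_eq_two_of_adj_of_adj inr_ne_inl (by simp [h]) (adj_inr_inl.2 (update_self ..))
    (adj_inl_inl.2 hne)

theorem dist_inr_inl_ne {i : Fin t} {u v : Fin t → Bool} (h : u i ≠ v i) :
    (Mt t).dist (inr i) (inl u) ≠ (Mt t).dist (inr i) (inl v) := by
  cases hu : u i <;> cases hv : v i <;> simp_all [dist_inr_inl_of_true, dist_inr_inl_of_false]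

theorem dist_inl_zero_inr (i : Fin t) : (Mt t).dist (inl fun _ ↦ false) (inr i) = 2 := by
  rw [dist_comm, dist_inr_inl_of_false rfl]

def evenWeightSet (t : ℕ) : Finset ((Fin t → Bool) ⊕ Fin t) :=
  (filter (fun u ↦ Even (weight u)) univ).disjSum univ

@[simp] theorem inl_mem_evenWeightSet {u : Fin t → Bool} :
    inl u ∈ evenWeightSet t ↔ Even (weight u) := by
  simp [evenWeightSet]

@[simp] theorem inr_mem_evenWeightSet (i : Fin t) : inr i ∈ evenWeightSet t := by
  simp [evenWeightSet]

theorem card_evenWeightSet [NeZero t] : #(evenWeightSet t) = t + 2 ^ (t - 1) := by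
  rw [evenWeightSet, card_disjSum, card_even_weight, card_univ, Fintype.card_fin, add_comm]

theorem isDoublyResolved_inl_of_even {u v : Fin t → Bool} {i : Fin t} (hu : Even (weight u))
    (hi : u i ≠ v i) : IsDoublyResolved (Mt t) (evenWeightSet t) (inl u) (inl v) :=
  ⟨inl u, by simpa using hu, inr i, by simp, inl_ne_inr,
    (connected t).dist_self_ne (by simpa using ne_of_apply_ne (· i) hi), dist_inr_inl_ne hi⟩

theorem isDoublyResolved_inl_inl {u v : Fin t → Bool} (h : u ≠ v) :
    IsDoublyResolved (Mt t) (evenWeightSet t) (inl u) (inl v) := by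
  obtain ⟨i, hi⟩ := Function.ne_iff.1 h
  by_cases htwo : ∃ j ≠ i, u j ≠ v j
  · obtain ⟨j, hji, hj⟩ := htwo
    exact ⟨inr i, by simp, inr j, by simp, by simpa using hji.symm,
      dist_inr_inl_ne hi, dist_inr_inl_ne hj⟩
  have hv : v = update u i (!u i) := by
    ext j
    by_cases hji : j = i
    · subst hji; cases hu : u j <;> simp_all
    · simp_all
  by_cases hu : Even (weight u)
  · exact isDoublyResolved_inl_of_even hu hi
  · exact (isDoublyResolved_inl_of_even ((hv ▸ even_weight_flip u i).2 hu) hi.symm).symm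

theorem isDoublyResolved_inl_inr (u : Fin t → Bool) (j : Fin t) :
    IsDoublyResolved (Mt t) (evenWeightSet t) (inl u) (inr j) := by
  refine ⟨inr j, by simp, inl fun _ ↦ false, by simp [weight], inr_ne_inl,
    ((connected t).dist_self_ne inr_ne_inl).symm, ?_⟩
  have := dist_inl_inl_le_one (fun _ ↦ false) u
  rw [dist_inl_zero_inr]
  omega

theorem isDoublyResolved_inr_inr {i j : Fin t} (h : i ≠ j) :
    IsDoublyResolved (Mt t) (evenWeightSet t) (inr i) (inr j) :=
  ⟨inr i, by simp, inr j, by simp, by simpa using h,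
    (connected t).dist_self_ne (by simpa using h),
    ((connected t).dist_self_ne (by simpa using h.symm)).symm⟩

theorem isFTResolving_evenWeightSet (t : ℕ) : IsFTResolving (Mt t) (evenWeightSet t) := by
  apply isFTResolving_of_isDoublyResolved
  rintro (u | i) (v | j) hxy
  · exact isDoublyResolved_inl_inl (by simpa using hxy)
  · exact isDoublyResolved_inl_inr u j
  · exact (isDoublyResolved_inl_inr v i).symm
  · exact isDoublyResolved_inr_inr (by simpa using hxy)

end Mt

theorem stmt11 (t : ℕ) (ht : 3 ≤ t)
    (S : Finset ((Fin t → Bool) ⊕ Fin t))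
    (hSdef : S = Finset.univ.filter (fun x => match x with
      | Sum.inl u => Even ((Finset.univ.filter (fun i : Fin t => u i = true)).card)
      | Sum.inr _ => True)) :
    IsFTResolving (Mt t) ↑S ∧ S.card = t + 2 ^ (t - 1) := by
  have hS : S = Mt.evenWeightSet t := by
    ext (u | i) <;> simp [hSdef, weight]
  have : NeZero t := ⟨by omega⟩
  exact hS ▸ ⟨Mt.isFTResolving_evenWeightSet t, Mt.card_evenWeightSet⟩
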